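/- arXiv:2210.02668 — 5 statements merged into one kernel-verified Lean document; each statement's English description precedes it below -/
import Mathlib

section
/- Let p be a prime with p ≡ 3 (mod 4) and let q, r be positive integers with q² − 8p·r² = 1 and 2q = X² + 2pY², 2r = XY for integers X, Y. Then Y² = (q + α)/(2p) for some α ∈ {1, −1}; in particular 2p divides q + 1 or q − 1. -/
theorem stmt_5 (p q r X Y : ℤ) (hp : Prime p) (hp4 : p % 4 = 3)
    (hq : 0 < q) (hr : 0 < r) (hpell : q ^ 2 - 8 * p * r ^ 2 = 1)
    (hX : 2 * q = X ^ 2 + 2 * p * Y ^ 2) (hY : 2 * r = X * Y) :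
    (∃ α : ℤ, (α = 1 ∨ α = -1) ∧ 2 * p * Y ^ 2 = q + α) ∧
      (2 * p ∣ q + 1 ∨ 2 * p ∣ q - 1) := by
  have key : (X ^ 2 - 2 * p * Y ^ 2) ^ 2 = 4 := by
    linear_combination (-(2 * q + X ^ 2 + 2 * p * Y ^ 2)) * hX +
      8 * p * (2 * r + X * Y) * hY + 4 * hpell
  have h2 : (X ^ 2 - 2 * p * Y ^ 2 - 2) * (X ^ 2 - 2 * p * Y ^ 2 + 2) = 0 := by
    nlinarith [key]
  rcases mul_eq_zero.mp h2 with h | h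
  · have hd : 2 * p * Y ^ 2 = q - 1 := by linarith
    exact ⟨⟨-1, Or.inr rfl, by linarith⟩, Or.inr ⟨Y ^ 2, by linarith⟩⟩
  · have hd : 2 * p * Y ^ 2 = q + 1 := by linarith
    exact ⟨⟨1, Or.inl rfl, by linarith⟩, Or.inl ⟨Y ^ 2, by linarith⟩⟩
end

section
/- For an integer h and a positive integer k with gcd(h, k) = 1, the Dedekind sum s(h, k) := Σ_{m=1}^{k} ((hm/k))·((m/k)) satisfies 6k·s(h,k) ∈ ℤ. -/
/-- The sawtooth function ((y)) : y - ⌊y⌋ - 1/2 if y ∉ ℤ, and 0 if y ∈ ℤ. -/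
noncomputable def sawtooth (y : ℚ) : ℚ := if y.den = 1 then 0 else y - ⌊y⌋ - 1/2

/-- The Dedekind sum s(h,k) = Σ_{m=1}^{k} ((hm/k))((m/k)). -/
noncomputable def dedekindS (h : ℤ) (k : ℕ) : ℚ :=
  ∑ m ∈ Finset.Icc 1 k, sawtooth ((h * m : ℤ) / (k : ℚ)) * sawtooth ((m : ℚ) / (k : ℚ))

lemma saw_eq (a : ℤ) (b : ℕ) (hb : 0 < b) (hnd : ¬ (b:ℤ) ∣ a) :
    sawtooth ((a:ℚ)/(b:ℚ)) = ((2*(a % (b:ℤ)) - b : ℤ) : ℚ) / (2*b) := by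
  have hb0 : ((b:ℚ)) ≠ 0 := by positivity
  have hbz : ((b:ℕ):ℤ) ≠ 0 := by positivity
  have hden : ((a:ℚ)/(b:ℚ)).den ≠ 1 := by
    intro hd
    exact hnd ((Rat.den_div_intCast_eq_one_iff a b hbz).mp (by exact_mod_cast hd))
  rw [sawtooth, if_neg hden, Rat.floor_intCast_div_natCast, Int.emod_def]
  push_cast
  field_simp

lemma sum_Icc_id (n : ℕ) : 2 * ∑ m ∈ Finset.Icc 1 n, (m:ℤ) = n*(n+1) := by
  induction n with
  | zero => simp
  | succ n ih =>
    rw [← Finset.insert_Icc_right_eq_Icc_add_one (by omega : 1 ≤ n + 1),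
      Finset.sum_insert (by simp)]
    push_cast
    push_cast at ih
    linarith

lemma sum_Icc_sq (n : ℕ) : 6 * ∑ m ∈ Finset.Icc 1 n, (m:ℤ)^2 = n*(n+1)*(2*n+1) := by
  induction n with
  | zero => simp
  | succ n ih =>
    rw [← Finset.insert_Icc_right_eq_Icc_add_one (by omega : 1 ≤ n + 1),
      Finset.sum_insert (by simp)]
    push_cast
    push_cast at ih
    linarith

theorem stmt_6 (h : ℤ) (k : ℕ) (hk : 0 < k) (hcop : Int.gcd h k = 1) :
    ∃ n : ℤ, 6 * (k : ℚ) * dedekindS h k = n := by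
  obtain ⟨n, rfl⟩ : ∃ n, k = n + 1 := ⟨k - 1, by omega⟩
  set K : ℤ := ((n + 1 : ℕ) : ℤ) with hKdef
  have hKpos : 0 < K := by positivity
  have hKQ : ((n + 1 : ℕ) : ℚ) ≠ 0 := by positivity
  have hcop' : IsCoprime (K : ℤ) h := by
    rw [Int.isCoprime_iff_gcd_eq_one, Int.gcd_comm]
    exact hcop
  -- the整 integer sum
  set S : ℤ := ∑ m ∈ Finset.Icc 1 n, (2 * ((h * m) % K) - K) * (2 * (m:ℤ) - K) with hSdef
  -- Step 1: 4 K² · dedekindS = S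
  have key : (4:ℚ) * (K:ℚ)^2 * dedekindS h (n+1) = (S : ℚ) := by
    rw [dedekindS, ← Finset.insert_Icc_right_eq_Icc_add_one (by omega : 1 ≤ n + 1),
      Finset.sum_insert (by simp)]
    have hlast : sawtooth (((n:ℚ) + 1) / ((n:ℚ) + 1)) = 0 := by
      have : ((n:ℚ) + 1) / ((n:ℚ) + 1) = 1 := div_self (by positivity)
      rw [this, sawtooth]
      norm_num
    push_cast
    rw [hlast, mul_zero, zero_add, hSdef, Finset.mul_sum]
    push_cast
    refine Finset.sum_congr rfl fun m hm => ?_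
    obtain ⟨hm1, hm2⟩ := Finset.mem_Icc.mp hm
    have hmltk : m < n + 1 := by omega
    have hnd1 : ¬ (((n+1:ℕ) : ℤ) ∣ (m : ℤ)) := by
      intro hd
      have := Int.le_of_dvd (by exact_mod_cast hm1) hd
      have h2 : ((n+1:ℕ) : ℤ) ≤ (m : ℤ) := this
      push_cast at h2
      omega
    have hnd2 : ¬ (((n+1:ℕ) : ℤ) ∣ h * m) := fun hd =>
      hnd1 (hcop'.dvd_of_dvd_mul_left hd)
    have e1 := saw_eq (h * m) (n+1) (by omega) hnd2
    have e2 := saw_eq (m : ℤ) (n+1) (by omega) hnd1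
    push_cast at e1 e2
    have hmmod : ((m : ℤ)) % (((n:ℤ)+1)) = m := by
      rw [Int.emod_eq_of_lt (by exact_mod_cast Nat.zero_le m) (by exact_mod_cast hmltk)]
    rw [e1, e2, hmmod] at *
    have hKQ' : ((n:ℚ) + 1) ≠ 0 := by positivity
    push_cast [hKdef]
    field_simp
    ring
  -- Step 2: 2K ∣ 3S
  obtain ⟨t, ht⟩ : ∃ t : ℤ, K * n = 2 * t := by
    obtain ⟨c, hc⟩ := Int.even_mul_succ_self (n : ℤ)
    exact ⟨c, by rw [hKdef]; push_cast; linarith⟩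
  set A : ℤ := ∑ m ∈ Finset.Icc 1 n, (m:ℤ) with hA
  set B : ℤ := ∑ m ∈ Finset.Icc 1 n, (m:ℤ)^2 with hB
  set Q : ℤ := ∑ m ∈ Finset.Icc 1 n, ((h * m) / K) * (2 * (m:ℤ) - K) with hQ
  have e4 : S = 4*h*B - 2*(h+1)*K*A + K^2*n - 2*K*Q := by
    have : S = ∑ m ∈ Finset.Icc 1 n,
        (4*h*(m:ℤ)^2 - 2*(h+1)*K*(m:ℤ) + K^2 - 2*K*(((h*m)/K) * (2*(m:ℤ) - K))) := by
      refine Finset.sum_congr rfl fun m hm => ?_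
      rw [Int.emod_def]; ring
    rw [this]
    rw [Finset.sum_sub_distrib, Finset.sum_add_distrib, Finset.sum_sub_distrib,
      Finset.sum_const, ← Finset.mul_sum, ← Finset.mul_sum, ← Finset.mul_sum,
      Nat.card_Icc]
    simp [hA, hB, hQ]
    ring
  have e1 : 6 * B = (n:ℤ) * K * (2*K - 1) := by
    have := sum_Icc_sq n
    rw [← hB] at this
    rw [this, hKdef]; push_cast; ring
  have e2 : 2 * A = (n:ℤ) * K := by
    have := sum_Icc_id n
    rw [← hA] at this
    rw [this, hKdef]; push_cast; ring
  have e3 : (n:ℤ) * K = 2 * t := by linarith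
  refine ⟨h * n * (2*K - 1) - 3*(h+1)*t + 3*t - 3*Q, ?_⟩
  have hdvd : 3 * S = 2 * K * (h * n * (2*K - 1) - 3*(h+1)*t + 3*t - 3*Q) := by
    linear_combination 3*e4 + 2*h*e1 - 3*(h+1)*K*e2 + (3*K - 3*(h+1)*K) * e3
  -- conclude
  have hKQ0 : ((K:ℚ)) ≠ 0 := by
    have : (0:ℚ) < (K:ℚ) := by exact_mod_cast hKpos
    linarith
  have : (2:ℚ) * K * (6 * ((n:ℚ)+1) * dedekindS h (n+1)) =
      (2:ℚ) * K * ((h * n * (2*K - 1) - 3*(h+1)*t + 3*t - 3*Q : ℤ) : ℚ) := by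
    have hKcast : ((n:ℚ) + 1) = (K:ℚ) := by rw [hKdef]; push_cast; ring
    rw [hKcast]
    have : ((3 * S : ℤ) : ℚ) = ((2 * K * (h * n * (2*K - 1) - 3*(h+1)*t + 3*t - 3*Q) : ℤ) : ℚ) := by
      exact_mod_cast congrArg (fun x : ℤ => (x : ℚ)) hdvd
    push_cast at this ⊢
    nlinarith [key, this]
  have := mul_left_cancel₀ (by positivity : ((2:ℚ) * K) ≠ 0) this
  push_cast at this ⊢
  linarith [this]
end

section
/- For coprime positive integers h and k, the Dedekind sums satisfy the reciprocity law s(h,k) + s(k,h) = (h² + k² + 1)/(12hk) − 1/4. -/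
set_option maxHeartbeats 1000000

open Finset

lemma saw_nat (n : ℕ) : sawtooth (n : ℚ) = 0 := by simp [sawtooth]

lemma saw_div (a b : ℕ) (hb : 0 < b) (hnd : ¬ (b ∣ a)) :
    sawtooth ((a : ℚ) / b) = (a : ℚ) / b - ((a / b : ℕ) : ℚ) - 1/2 := by
  have hb0 : (b : ℚ) ≠ 0 := Nat.cast_ne_zero.2 hb.ne'
  have hden : ((a : ℚ) / b).den ≠ 1 := by
    intro hd
    rw [Rat.den_eq_one_iff] at hd
    have h2 : (((a:ℚ)/b).num : ℚ) * b = a := by rw [hd]; field_simp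
    have h3 : ((a:ℚ)/b).num * b = a := by exact_mod_cast h2
    have h4 : 0 ≤ ((a:ℚ)/b).num := by positivity
    exact hnd ⟨((a:ℚ)/b).num.toNat, by
      have := Int.toNat_of_nonneg h4
      zify; rw [this]; linarith [h3]⟩
  rw [sawtooth, if_neg hden]
  have : ⌊(a : ℚ) / b⌋ = ((a / b : ℕ) : ℤ) := by
    rw [show ((a:ℚ) : ℚ) = ((a : ℤ) : ℚ) by push_cast; ring,
      Rat.floor_intCast_div_natCast]
    exact (Int.natCast_div a b).symm
  rw [this]; push_cast; ring_nf; norm_cast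

lemma sum_id_q (n : ℕ) : ∑ m ∈ Icc 1 n, (m : ℚ) = n * (n + 1) / 2 := by
  induction n with
  | zero => simp
  | succ n ih =>
    rw [Finset.sum_Icc_succ_top (by omega)]
    push_cast; rw [ih]; ring

lemma sum_sq_q (n : ℕ) : ∑ m ∈ Icc 1 n, (m : ℚ)^2 = n * (n + 1) * (2 * n + 1) / 6 := by
  induction n with
  | zero => simp
  | succ n ih =>
    rw [Finset.sum_Icc_succ_top (by omega)]
    push_cast; rw [ih]; ring

lemma dede_eq (h k : ℕ) (hk : 0 < k) (hcop : Nat.Coprime h k) :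
    dedekindS (h : ℤ) k =
      ∑ m ∈ Icc 1 (k-1),
        (((h*m : ℕ) : ℚ)/k - ((h*m/k : ℕ) : ℚ) - 1/2) * ((m : ℚ)/k - 1/2) := by
  have hsplit : Icc 1 k = insert k (Icc 1 (k-1)) := by
    ext x; simp [mem_Icc, mem_insert]; omega
  rw [dedekindS, hsplit, Finset.sum_insert (by simp [mem_Icc]; omega)]
  have hterm : sawtooth ((h * k : ℤ) / (k : ℚ)) * sawtooth ((k : ℚ) / (k : ℚ)) = 0 := by
    have hk0 : (k : ℚ) ≠ 0 := Nat.cast_ne_zero.2 hk.ne'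
    have : ((h * k : ℤ) : ℚ) / (k : ℚ) = (h : ℚ) := by push_cast; field_simp
    rw [this, saw_nat, zero_mul]
  rw [hterm, zero_add]
  apply Finset.sum_congr rfl
  intro m hm
  simp only [mem_Icc] at hm
  have hm1 : 1 ≤ m := hm.1
  have hmk : m < k := by omega
  have hnd1 : ¬ (k ∣ h * m) := by
    intro hd
    have h2 : k ∣ m := (Nat.Coprime.dvd_of_dvd_mul_left (hcop.symm) hd)
    have := Nat.le_of_dvd (by omega) h2
    omega
  have hnd2 : ¬ (k ∣ m) := by
    intro hd; have := Nat.le_of_dvd (by omega) hd; omega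
  have e1 : ((h * m : ℤ) : ℚ) / (k : ℚ) = ((h*m : ℕ) : ℚ) / k := by push_cast; ring
  rw [e1, saw_div _ _ hk hnd1, saw_div _ _ hk hnd2]
  have : m / k = 0 := Nat.div_eq_of_lt hmk
  rw [this]; norm_num

lemma sum_mod_bij (h k : ℕ) (hk : 0 < k) (hcop : Nat.Coprime h k) (f : ℕ → ℚ) :
    ∑ m ∈ Icc 1 (k-1), f (h * m % k) = ∑ r ∈ Icc 1 (k-1), f r := by
  apply Finset.sum_bij (fun m _ => h * m % k)
  · intro m hm
    simp only [mem_Icc] at hm ⊢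
    have h1 : h * m % k < k := Nat.mod_lt _ hk
    have h2 : h * m % k ≠ 0 := by
      intro h0
      have hd : k ∣ h * m := Nat.dvd_of_mod_eq_zero h0
      have h3 : k ∣ m := Nat.Coprime.dvd_of_dvd_mul_left hcop.symm hd
      have := Nat.le_of_dvd (by omega) h3
      omega
    omega
  · intro m₁ hm₁ m₂ hm₂ heq
    simp only [mem_Icc] at hm₁ hm₂
    have : m₁ % k = m₂ % k := by
      have hmeq : h * m₁ ≡ h * m₂ [MOD k] := heq
      exact Nat.ModEq.cancel_left_of_coprime (by rwa [Nat.coprime_comm] at hcop) hmeq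
    rwa [Nat.mod_eq_of_lt (by omega), Nat.mod_eq_of_lt (by omega)] at this
  · intro b hb
    have hcard : (Icc 1 (k-1)).card ≤ (Icc 1 (k-1)).card := le_refl _
    obtain ⟨a, ha, hab⟩ := Finset.surj_on_of_inj_on_of_card_le (fun m _ => h * m % k)
      (by
        intro m hm
        simp only [mem_Icc] at hm ⊢
        have h1 : h * m % k < k := Nat.mod_lt _ hk
        have h2 : h * m % k ≠ 0 := by
          intro h0
          have hd : k ∣ h * m := Nat.dvd_of_mod_eq_zero h0
          have h3 : k ∣ m := Nat.Coprime.dvd_of_dvd_mul_left hcop.symm hd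
          have := Nat.le_of_dvd (by omega) h3
          omega
        omega)
      (by
        intro m₁ m₂ hm₁ hm₂ heq
        simp only [mem_Icc] at hm₁ hm₂
        have : m₁ % k = m₂ % k := by
          have hmeq : h * m₁ ≡ h * m₂ [MOD k] := heq
          exact Nat.ModEq.cancel_left_of_coprime (by rwa [Nat.coprime_comm] at hcop) hmeq
        rwa [Nat.mod_eq_of_lt (by omega), Nat.mod_eq_of_lt (by omega)] at this)
      hcard b hb
    exact ⟨a, ha, hab.symm⟩
  · intro m hm; rfl

lemma filter_Icc (h k : ℕ) (hh : 0 < h) (hk : 0 < k) (hcop : Nat.Coprime h k)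
    (m : ℕ) (hm : m ∈ Icc 1 (k-1)) :
    (Icc 1 (h-1)).filter (fun n => n * k < h * m) = Icc 1 (h * m / k) := by
  simp only [mem_Icc] at hm
  have hndvd : ¬ (k ∣ h * m) := by
    intro hd
    have h3 : k ∣ m := Nat.Coprime.dvd_of_dvd_mul_left hcop.symm hd
    have := Nat.le_of_dvd (by omega) h3
    omega
  have hdlt : h * m / k ≤ h - 1 := by
    have hmk : m < k := by omega
    have h6 : h * m < h * k := (Nat.mul_lt_mul_left hh).2 hmk
    have : h * m / k < h := Nat.div_lt_of_lt_mul (by rw [Nat.mul_comm k h]; exact h6)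
    omega
  ext n
  simp only [mem_filter, mem_Icc]
  constructor
  · rintro ⟨⟨h1, h2⟩, h3⟩
    exact ⟨h1, (Nat.le_div_iff_mul_le hk).2 h3.le⟩
  · rintro ⟨h1, h2⟩
    refine ⟨⟨h1, le_trans h2 hdlt⟩, ?_⟩
    have h4 : n * k ≤ h * m := (Nat.le_div_iff_mul_le hk).1 h2
    rcases lt_or_eq_of_le h4 with h5 | h5
    · exact h5
    · exact absurd ⟨n, by linarith⟩ hndvd

lemma grid_sum (h k : ℕ) (hh : 0 < h) (hk : 0 < k) (hcop : Nat.Coprime h k)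
    (f : ℕ → ℕ → ℚ) :
    ∑ p ∈ ((Icc 1 (k-1)) ×ˢ (Icc 1 (h-1))).filter (fun p => p.2 * k < h * p.1), f p.1 p.2
      = ∑ m ∈ Icc 1 (k-1), ∑ n ∈ Icc 1 (h * m / k), f m n := by
  rw [Finset.sum_filter, Finset.sum_product]
  refine Finset.sum_congr rfl fun m hm => ?_
  rw [← Finset.sum_filter, filter_Icc h k hh hk hcop m hm]

lemma swap_sum (h k : ℕ) (hh : 0 < h) (hk : 0 < k) :
    ∑ p ∈ ((Icc 1 (h-1)) ×ˢ (Icc 1 (k-1))).filter (fun p => p.2 * h < k * p.1), ((p.1 : ℚ))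
      = ∑ p ∈ ((Icc 1 (k-1)) ×ˢ (Icc 1 (h-1))).filter (fun p => p.2 * k < h * p.1),
          ((h : ℚ) - (p.2 : ℚ)) := by
  apply Finset.sum_nbij' (i := fun p => (k - p.2, h - p.1)) (j := fun q => (h - q.2, k - q.1))
  · intro p hp
    simp only [mem_filter, mem_product, mem_Icc] at hp ⊢
    obtain ⟨⟨⟨hn1, hn2⟩, hm1, hm2⟩, hc⟩ := hp
    refine ⟨⟨⟨by omega, by omega⟩, by omega, by omega⟩, ?_⟩
    have h1 : p.2 ≤ k := by omega
    have h2 : p.1 ≤ h := by omega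
    zify [h1, h2]
    zify at hc
    nlinarith [hc]
  · intro q hq
    simp only [mem_filter, mem_product, mem_Icc] at hq ⊢
    obtain ⟨⟨⟨hm1, hm2⟩, hn1, hn2⟩, hc⟩ := hq
    refine ⟨⟨⟨by omega, by omega⟩, by omega, by omega⟩, ?_⟩
    have h1 : q.2 ≤ h := by omega
    have h2 : q.1 ≤ k := by omega
    zify [h1, h2]
    zify at hc
    nlinarith [hc]
  · intro p hp
    simp only [mem_filter, mem_product, mem_Icc] at hp
    obtain ⟨⟨⟨hn1, hn2⟩, hm1, hm2⟩, hc⟩ := hp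
    ext <;> simp <;> omega
  · intro q hq
    simp only [mem_filter, mem_product, mem_Icc] at hq
    obtain ⟨⟨⟨hm1, hm2⟩, hn1, hn2⟩, hc⟩ := hq
    ext <;> simp <;> omega
  · intro p hp
    simp only [mem_filter, mem_product, mem_Icc] at hp
    obtain ⟨⟨⟨hn1, hn2⟩, hm1, hm2⟩, hc⟩ := hp
    have h2 : p.1 ≤ h := by omega
    push_cast [Nat.cast_sub h2]
    ring

theorem stmt_9 (h k : ℕ) (hh : 0 < h) (hk : 0 < k) (hcop : Nat.Coprime h k) :
    dedekindS (h : ℤ) k + dedekindS (k : ℤ) h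
      = ((h : ℚ) ^ 2 + (k : ℚ) ^ 2 + 1) / (12 * h * k) - 1/4 := by
  have hk0 : (k : ℚ) ≠ 0 := Nat.cast_ne_zero.2 hk.ne'
  have hh0 : (h : ℚ) ≠ 0 := Nat.cast_ne_zero.2 hh.ne'
  have hkc : ((k - 1 : ℕ) : ℚ) = (k : ℚ) - 1 := by
    push_cast [Nat.cast_sub hk]; ring
  have hhc : ((h - 1 : ℕ) : ℚ) = (h : ℚ) - 1 := by
    push_cast [Nat.cast_sub hh]; ring
  set A := ∑ m ∈ Icc 1 (k-1), (m : ℚ) * ((h*m/k : ℕ) : ℚ) with hAdef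
  set D := ∑ m ∈ Icc 1 (k-1), ((h*m/k : ℕ) : ℚ) with hDdef
  set Q := ∑ m ∈ Icc 1 (k-1), ((h*m/k : ℕ) : ℚ)^2 with hQdef
  set B := ∑ n ∈ Icc 1 (h-1), (n : ℚ) * ((k*n/h : ℕ) : ℚ) with hBdef
  set D' := ∑ n ∈ Icc 1 (h-1), ((k*n/h : ℕ) : ℚ) with hD'def
  -- mod identity pointwise
  have hmodm : ∀ m ∈ Icc 1 (k-1),
      ((h*m % k : ℕ) : ℚ) = (h : ℚ) * m - (k : ℚ) * ((h*m/k : ℕ) : ℚ) := by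
    intro m _
    have h1 := Nat.div_add_mod (h*m) k
    have hc : ((k * (h*m/k) + h*m % k : ℕ) : ℚ) = ((h*m : ℕ) : ℚ) := by rw [h1]
    push_cast at hc; linarith
  -- D value
  have hD : D = ((h : ℚ) - 1) * ((k : ℚ) - 1) / 2 := by
    have hmod := sum_mod_bij h k hk hcop (fun r => (r : ℚ))
    rw [Finset.sum_congr rfl hmodm, Finset.sum_sub_distrib,
      ← Finset.mul_sum, ← Finset.mul_sum, sum_id_q, hkc] at hmod
    rw [← hDdef] at hmod
    have hky : (k : ℚ) * D = (k:ℚ) * (((h : ℚ) - 1) * ((k : ℚ) - 1) / 2) := by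
      linear_combination -hmod
    exact mul_left_cancel₀ hk0 hky
  -- D' value
  have hD' : D' = ((k : ℚ) - 1) * ((h : ℚ) - 1) / 2 := by
    have hmodn : ∀ n ∈ Icc 1 (h-1),
        ((k*n % h : ℕ) : ℚ) = (k : ℚ) * n - (h : ℚ) * ((k*n/h : ℕ) : ℚ) := by
      intro n _
      have h1 := Nat.div_add_mod (k*n) h
      have hc : ((h * (k*n/h) + k*n % h : ℕ) : ℚ) = ((k*n : ℕ) : ℚ) := by rw [h1]
      push_cast at hc; linarith
    have hmod := sum_mod_bij k h hh hcop.symm (fun r => (r : ℚ))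
    rw [Finset.sum_congr rfl hmodn, Finset.sum_sub_distrib,
      ← Finset.mul_sum, ← Finset.mul_sum, sum_id_q, hhc] at hmod
    rw [← hD'def] at hmod
    have hky : (h : ℚ) * D' = (h:ℚ) * (((k : ℚ) - 1) * ((h : ℚ) - 1) / 2) := by
      linear_combination -hmod
    exact mul_left_cancel₀ hh0 hky
  -- Q equation
  have hQ : (k : ℚ)^2 * Q =
      (1 - (h:ℚ)^2) * (((k:ℚ)-1) * k * (2*k-1) / 6) + 2 * h * k * A := by
    have hmod := sum_mod_bij h k hk hcop (fun r => (r : ℚ)^2)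
    have hptq : ∀ m ∈ Icc 1 (k-1),
        ((h*m % k : ℕ) : ℚ)^2 =
          (h:ℚ)^2 * (m:ℚ)^2 - 2*h*k * ((m:ℚ) * ((h*m/k : ℕ) : ℚ))
            + (k:ℚ)^2 * ((h*m/k : ℕ) : ℚ)^2 := by
      intro m hm
      rw [hmodm m hm]; ring
    rw [Finset.sum_congr rfl hptq, Finset.sum_add_distrib, Finset.sum_sub_distrib,
      ← Finset.mul_sum, ← Finset.mul_sum, ← Finset.mul_sum, sum_sq_q, hkc] at hmod
    rw [← hAdef, ← hQdef] at hmod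
    linear_combination hmod
  -- B equation
  have hB : B = (h:ℚ) * D - Q/2 - D/2 := by
    have step1 : B = ∑ p ∈ ((Icc 1 (h-1)) ×ˢ (Icc 1 (k-1))).filter
        (fun p => p.2 * h < k * p.1), ((p.1 : ℚ)) := by
      rw [grid_sum k h hk hh hcop.symm (fun n m => (n : ℚ))]
      rw [hBdef]
      refine Finset.sum_congr rfl fun n _ => ?_
      rw [Finset.sum_const, Nat.card_Icc]
      simp [nsmul_eq_mul, mul_comm]
    have step3 : ∑ p ∈ ((Icc 1 (k-1)) ×ˢ (Icc 1 (h-1))).filter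
        (fun p => p.2 * k < h * p.1), ((h : ℚ) - (p.2 : ℚ))
        = (h:ℚ) * D - Q/2 - D/2 := by
      rw [grid_sum h k hh hk hcop (fun m n => (h : ℚ) - (n : ℚ))]
      have hpt : ∀ m ∈ Icc 1 (k-1),
          ∑ n ∈ Icc 1 (h*m/k), ((h : ℚ) - (n : ℚ))
            = (h:ℚ) * ((h*m/k : ℕ) : ℚ) - (1/2) * ((h*m/k : ℕ) : ℚ)^2
              - (1/2) * ((h*m/k : ℕ) : ℚ) := by
        intro m _
        rw [Finset.sum_sub_distrib, Finset.sum_const, sum_id_q, Nat.card_Icc]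
        simp only [Nat.add_sub_cancel, nsmul_eq_mul]
        ring
      rw [Finset.sum_congr rfl hpt, Finset.sum_sub_distrib, Finset.sum_sub_distrib,
        ← Finset.mul_sum, ← Finset.mul_sum, ← Finset.mul_sum]
      rw [hDdef, hQdef]; ring
    rw [step1, swap_sum h k hh hk, step3]
  -- dedekind sums expansion
  have hs1 : dedekindS (h : ℤ) k =
      (h:ℚ)/(k:ℚ)^2 * (((k:ℚ)-1) * k * (2*k-1) / 6) - (1/k) * A
        - ((1+(h:ℚ))/(2*k)) * (((k:ℚ)-1) * k / 2) + (1/2) * D + ((k:ℚ)-1)/4 := by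
    rw [dede_eq h k hk hcop]
    have hpt : ∀ m ∈ Icc 1 (k-1),
        (((h*m : ℕ) : ℚ)/k - ((h*m/k : ℕ) : ℚ) - 1/2) * ((m : ℚ)/k - 1/2)
          = (h:ℚ)/(k:ℚ)^2 * (m:ℚ)^2 - (1/k) * ((m:ℚ) * ((h*m/k : ℕ) : ℚ))
            - ((1+(h:ℚ))/(2*k)) * (m:ℚ) + (1/2) * ((h*m/k : ℕ) : ℚ) + 1/4 := by
      intro m _
      push_cast
      field_simp
      ring
    rw [Finset.sum_congr rfl hpt, Finset.sum_add_distrib, Finset.sum_add_distrib,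
      Finset.sum_sub_distrib, Finset.sum_sub_distrib,
      ← Finset.mul_sum, ← Finset.mul_sum, ← Finset.mul_sum, ← Finset.mul_sum,
      sum_sq_q, sum_id_q, Finset.sum_const, Nat.card_Icc, hkc]
    rw [hAdef, hDdef]
    simp only [Nat.add_sub_cancel, nsmul_eq_mul, hkc]
    ring
  have hs2 : dedekindS (k : ℤ) h =
      (k:ℚ)/(h:ℚ)^2 * (((h:ℚ)-1) * h * (2*h-1) / 6) - (1/h) * B
        - ((1+(k:ℚ))/(2*h)) * (((h:ℚ)-1) * h / 2) + (1/2) * D' + ((h:ℚ)-1)/4 := by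
    rw [dede_eq k h hh hcop.symm]
    have hpt : ∀ n ∈ Icc 1 (h-1),
        (((k*n : ℕ) : ℚ)/h - ((k*n/h : ℕ) : ℚ) - 1/2) * ((n : ℚ)/h - 1/2)
          = (k:ℚ)/(h:ℚ)^2 * (n:ℚ)^2 - (1/h) * ((n:ℚ) * ((k*n/h : ℕ) : ℚ))
            - ((1+(k:ℚ))/(2*h)) * (n:ℚ) + (1/2) * ((k*n/h : ℕ) : ℚ) + 1/4 := by
      intro n _
      push_cast
      field_simp
      ring
    rw [Finset.sum_congr rfl hpt, Finset.sum_add_distrib, Finset.sum_add_distrib,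
      Finset.sum_sub_distrib, Finset.sum_sub_distrib,
      ← Finset.mul_sum, ← Finset.mul_sum, ← Finset.mul_sum, ← Finset.mul_sum,
      sum_sq_q, sum_id_q, Finset.sum_const, Nat.card_Icc, hhc]
    rw [hBdef, hD'def]
    simp only [Nat.add_sub_cancel, nsmul_eq_mul, hhc]
    ring
  -- final assembly
  have hQ' : Q = ((1 - (h:ℚ)^2) * (((k:ℚ)-1) * k * (2*k-1) / 6) + 2 * h * k * A) / (k:ℚ)^2 := by
    rw [eq_div_iff (by positivity)]
    linarith [hQ]
  rw [hs1, hs2, hB, hQ', hD, hD']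
  field_simp
  ring
end

section
/- Let M = (x y; z w) ∈ SL₂(ℤ) with z ≠ 0, trace x + w > 2, and x > 0. Define n_M := (x+w)/z − sign(z)(3 + 12 s(w,|z|)). Then for M' = (3 −1; 1 0)·M, one has n_M = n_{M'}. -/
/-- For M = (x y; z w) with z ≠ 0, n_M = (x+w)/z - sign(z)(3 + 12 s(w,|z|)). -/
noncomputable def nMat (M : Matrix (Fin 2) (Fin 2) ℤ) : ℚ :=
  ((M 0 0 + M 1 1 : ℤ) : ℚ) / ((M 1 0 : ℤ) : ℚ)
    - (Int.sign (M 1 0) : ℚ) * (3 + 12 * dedekindS (M 1 1) (M 1 0).natAbs)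

open Finset

theorem sawtooth_add_intCast (y : ℚ) (n : ℤ) : sawtooth (y + n) = sawtooth y := by
  simp only [sawtooth, Rat.add_intCast_den, Int.floor_add_intCast, Int.cast_add]
  split_ifs <;> ring

theorem sawtooth_neg (y : ℚ) : sawtooth (-y) = -sawtooth y := by
  by_cases hy : y.den = 1
  · simp [sawtooth, hy]
  · have hceil : ⌈y⌉ = ⌊y⌋ + 1 := by
      refine (Int.ceil_eq_floor_add_one_iff_notMem y).2 ?_
      rintro ⟨n, rfl⟩
      exact hy (Rat.den_intCast n)
    simp only [sawtooth, Rat.den_neg_eq_den, hy, if_false, Int.floor_neg, hceil]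
    push_cast; ring

theorem sawtooth_of_pos_of_lt_one {y : ℚ} (h0 : 0 < y) (h1 : y < 1) :
    sawtooth y = y - 1 / 2 := by
  have hden : y.den ≠ 1 := by
    intro h
    rw [← (Rat.den_eq_one_iff y).1 h] at h0 h1
    norm_cast at h0 h1
    omega
  simp [sawtooth, hden, Int.floor_eq_zero_iff.2 ⟨h0.le, h1⟩]

theorem sawtooth_intCast_div_emod (t : ℤ) (k : ℕ) :
    sawtooth (t / k) = sawtooth ((t % k : ℤ) / k) := by
  rcases eq_or_ne k 0 with rfl | hk
  · simp
  · conv_lhs => rw [← Int.emod_add_mul_ediv t k]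
    push_cast
    rw [add_div, mul_div_cancel_left₀ _ (by exact_mod_cast hk), sawtooth_add_intCast]

theorem sawtooth_natCast_div_of_not_dvd {n k : ℕ} (hk : 0 < k) (hn : ¬ k ∣ n) :
    sawtooth (n / k) = (n % k : ℕ) / k - 1 / 2 := by
  have hr : 0 < n % k := Nat.pos_of_ne_zero fun h => hn (Nat.dvd_of_mod_eq_zero h)
  have hkQ : (0 : ℚ) < k := by exact_mod_cast hk
  have := sawtooth_intCast_div_emod n k
  push_cast at this
  rw [this, ← Int.natCast_mod]
  push_cast
  exact sawtooth_of_pos_of_lt_one (div_pos (by exact_mod_cast hr) hkQ)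
    ((div_lt_one hkQ).2 (by exact_mod_cast Nat.mod_lt n hk))

theorem dedekindS_eq_sum_range (h : ℤ) (k : ℕ) :
    dedekindS h k = ∑ m ∈ range k, sawtooth ((h * m : ℤ) / k) * sawtooth (m / k) := by
  set f : ℕ → ℚ := fun m => sawtooth ((h * m : ℤ) / k) * sawtooth (m / k)
  have hf0 : f 0 = 0 := by simp [f, sawtooth]
  have hfk : f k = 0 := by
    rcases eq_or_ne (k : ℚ) 0 with hk | hk <;> simp [f, hk, sawtooth]
  calc dedekindS h k = f 0 + ∑ m ∈ Icc 1 k, f m := by rw [hf0, zero_add]; rfl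
    _ = ∑ m ∈ range k, f m + f k := by
      rw [← sum_range_succ, range_eq_Ico, sum_eq_sum_Ico_succ_bot (by omega : 0 < k + 1),
        zero_add, Ico_add_one_right_eq_Icc]
    _ = ∑ m ∈ range k, f m := by rw [hfk, add_zero]

theorem dedekindS_neg (h : ℤ) (k : ℕ) : dedekindS (-h) k = -dedekindS h k := by
  simp only [dedekindS, ← sum_neg_distrib, neg_mul, Int.cast_neg, neg_div, sawtooth_neg]

theorem sum_range_natCast_eq_sum_zmod {M : Type*} [AddCommMonoid M] (k : ℕ) [NeZero k]
    (G : ZMod k → M) : ∑ m ∈ range k, G m = ∑ a, G a :=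
  sum_nbij' (↑) ZMod.val (by simp) (by simp [ZMod.val_lt])
    (fun _ hm => ZMod.val_cast_of_lt (mem_range.1 hm)) (fun a _ => ZMod.natCast_zmod_val a)
    (fun _ _ => rfl)

theorem sum_range_mul_mod_of_coprime {M : Type*} [AddCommMonoid M] {h k : ℕ}
    (hc : h.Coprime k) (F : ℕ → M) :
    ∑ m ∈ range k, F (h * m % k) = ∑ m ∈ range k, F m := by
  rcases eq_or_ne k 0 with rfl | hk
  · simp
  have : NeZero k := ⟨hk⟩
  set G : ZMod k → M := fun a => F a.val
  calc ∑ m ∈ range k, F (h * m % k) = ∑ m ∈ range k, G (ZMod.unitOfCoprime h hc * m) := by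
        refine sum_congr rfl fun m _ => ?_
        rw [ZMod.coe_unitOfCoprime, ← Nat.cast_mul]
        simp only [G, ZMod.val_natCast]
    _ = ∑ m ∈ range k, G m := by
        rw [sum_range_natCast_eq_sum_zmod k (fun a => G (_ * a)), sum_range_natCast_eq_sum_zmod k G]
        exact Equiv.sum_comp (Units.mulLeft _) G
    _ = ∑ m ∈ range k, F m := sum_congr rfl fun m hm => by
        simp [G, Nat.mod_eq_of_lt (mem_range.1 hm)]

noncomputable def sawtoothMod (k : ℕ) (a : ZMod k) : ℚ := sawtooth (a.val / k)

theorem sawtoothMod_intCast (k : ℕ) [NeZero k] (t : ℤ) :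
    sawtoothMod k t = sawtooth (t / k) := by
  rw [sawtoothMod, sawtooth_intCast_div_emod, ← ZMod.val_intCast, Int.cast_natCast]

theorem dedekindS_eq_sum_zmod (h : ℤ) (k : ℕ) [NeZero k] :
    dedekindS h k = ∑ a : ZMod k, sawtoothMod k (h * a) * sawtoothMod k a := by
  rw [dedekindS_eq_sum_range, ← sum_range_natCast_eq_sum_zmod]
  refine sum_congr rfl fun m _ => ?_
  rw [← Int.cast_natCast (R := ZMod k) m, ← Int.cast_mul, sawtoothMod_intCast,
    sawtoothMod_intCast, Int.cast_natCast]

theorem dedekindS_eq_of_mul_modEq_one {h h' : ℤ} {k : ℕ} (H : h * h' ≡ 1 [ZMOD k]) :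
    dedekindS h' k = dedekindS h k := by
  rcases eq_or_ne k 0 with rfl | hk
  · simp [dedekindS]
  have : NeZero k := ⟨hk⟩
  have hinv : (h' : ZMod k) * h = 1 := by
    rw [mul_comm, ← ZMod.intCast_eq_intCast_iff] at H; push_cast at H; exact H
  rw [dedekindS_eq_sum_zmod, dedekindS_eq_sum_zmod]
  refine Fintype.sum_bijective ((h' : ZMod k) * ·)
    (Units.mulLeft (Units.mkOfMulEqOne _ _ hinv)).bijective _ _ fun a => ?_
  rw [← mul_assoc, mul_comm (h : ZMod k), hinv, one_mul, mul_comm]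

theorem sum_range_natCast_mul_two {R : Type*} [CommRing R] (n : ℕ) :
    (∑ i ∈ range n, (i : R)) * 2 = n * (n - 1) := by
  induction n with
  | zero => simp
  | succ n ih => rw [sum_range_succ]; push_cast; linear_combination ih

theorem sum_range_natCast_sq_mul_six {R : Type*} [CommRing R] (n : ℕ) :
    (∑ i ∈ range n, (i : R) ^ 2) * 6 = n * (n - 1) * (2 * n - 1) := by
  induction n with
  | zero => simp
  | succ n ih => rw [sum_range_succ]; push_cast; linear_combination ih

theorem dedekindS_natCast_eq_sum_mul_mod {h k : ℕ} (hk : 0 < k) (hc : h.Coprime k) :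
    dedekindS h k
      = (∑ m ∈ range k, (m : ℚ) * (h * m % k : ℕ)) / (k : ℚ) ^ 2 - (k - 1) / 4 := by
  have hsum : dedekindS h k + 1 / 4 =
      ∑ m ∈ range k, (((h * m % k : ℕ) : ℚ) / k - 1 / 2) * ((m : ℚ) / k - 1 / 2) := by
    rw [dedekindS_eq_sum_range, ← add_sum_erase _ _ (mem_range.2 hk),
      ← add_sum_erase _ _ (mem_range.2 hk), add_right_comm]
    congr 1
    · simp [sawtooth]; norm_num
    refine sum_congr rfl fun m hm => ?_
    obtain ⟨hm0, hmk⟩ : 0 < m ∧ m < k := by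
      rw [mem_erase, mem_range] at hm; omega
    have hndvd : ∀ n, n.Coprime k → ¬ k ∣ n * m := fun n hn hd => by
      have := Nat.le_of_dvd hm0 (hn.symm.dvd_of_dvd_mul_left hd); omega
    have e1 := sawtooth_natCast_div_of_not_dvd hk (hndvd h hc)
    have e2 := sawtooth_natCast_div_of_not_dvd hk (hndvd 1 (Nat.coprime_one_left k))
    push_cast at e1 ⊢
    rw [one_mul, Nat.mod_eq_of_lt hmk] at e2
    rw [e1, e2]
  have hperm : ∑ m ∈ range k, ((h * m % k : ℕ) : ℚ) = ∑ m ∈ range k, (m : ℚ) :=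
    sum_range_mul_mod_of_coprime hc (fun n => (n : ℚ))
  calc dedekindS h k
      = ∑ m ∈ range k, ((m : ℚ) * (h * m % k : ℕ) / (k : ℚ) ^ 2
          - (((h * m % k : ℕ) : ℚ) + m) / (2 * k) + 1 / 4) - 1 / 4 := by
        rw [eq_sub_iff_add_eq, hsum]
        refine sum_congr rfl fun m _ => ?_
        field_simp; ring
    _ = (∑ m ∈ range k, (m : ℚ) * (h * m % k : ℕ)) / (k : ℚ) ^ 2
          - (∑ m ∈ range k, ((h * m % k : ℕ) : ℚ) + ∑ m ∈ range k, (m : ℚ)) / (2 * k)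
          + k / 4 - 1 / 4 := by
        simp only [sum_add_distrib, sum_sub_distrib, ← sum_div, sum_const, card_range,
          nsmul_eq_mul]
        ring
    _ = _ := by
        rw [hperm]
        field_simp
        linear_combination (-4 * k : ℚ) * sum_range_natCast_mul_two (R := ℚ) k

/-- Both sides are twice the sum of `n` over the lattice points `0 ≤ m < k`, `0 ≤ n < h` with
`kn ≤ hm`, taken by rows and by columns; coprimality rules out points with `kn = hm`, `n ≠ 0`. -/
theorem sum_range_div_mul_div_add_one {h k : ℕ} (hh : 0 < h) (hk : 0 < k) (hc : h.Coprime k) :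
    ∑ m ∈ range k, ((h * m / k : ℕ) : ℤ) * ((h * m / k : ℕ) + 1)
      = 2 * ∑ n ∈ range h, (n : ℤ) * (k - 1 - (k * n / h : ℕ)) := by
  have row : ∀ m ∈ range k,
      ((h * m / k : ℕ) : ℤ) * ((h * m / k : ℕ) + 1)
        = 2 * ∑ n ∈ range h, if k * n ≤ h * m then (n : ℤ) else 0 := by
    intro m hm
    have hq : h * m / k < h :=
      (Nat.div_lt_iff_lt_mul hk).2 (Nat.mul_lt_mul_of_pos_left (mem_range.1 hm) hh)
    have hfilter : (range h).filter (fun n => k * n ≤ h * m) = range (h * m / k + 1) := by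
      ext n
      have key : k * n ≤ h * m ↔ n ≤ h * m / k := by rw [Nat.le_div_iff_mul_le hk, mul_comm]
      simp only [mem_filter, mem_range, Nat.lt_succ_iff, key]
      omega
    rw [← sum_filter, hfilter, mul_comm 2, sum_range_natCast_mul_two]
    push_cast; ring
  have col : ∀ n ∈ range h,
      (∑ m ∈ range k, if k * n ≤ h * m then (n : ℤ) else 0)
        = n * (k - 1 - (k * n / h : ℕ)) := by
    intro n hn
    rw [mem_range] at hn
    rcases Nat.eq_zero_or_pos n with rfl | hn0
    · simp
    have hq : k * n / h < k := (Nat.div_lt_iff_lt_mul hh).2 (Nat.mul_lt_mul_of_pos_left hn hk)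
    have hne : ∀ m, k * n ≠ h * m := fun m he => by
      have := Nat.le_of_dvd hn0 (hc.dvd_of_dvd_mul_left ⟨m, he⟩)
      omega
    have hfilter : (range k).filter (fun m => k * n ≤ h * m) = Ico (k * n / h + 1) k := by
      ext m
      simp only [mem_filter, mem_range, mem_Ico, Nat.succ_le_iff, Nat.div_lt_iff_lt_mul hh,
        mul_comm m h]
      exact ⟨fun hm => ⟨lt_of_le_of_ne hm.2 (hne m), hm.1⟩, fun hm => ⟨hm.2, hm.1.le⟩⟩
    rw [← sum_filter, hfilter, sum_const, Nat.card_Ico, nsmul_eq_mul, Nat.cast_sub hq, mul_comm]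
    push_cast; ring
  rw [sum_congr rfl row, ← mul_sum, sum_comm, sum_congr rfl col]

theorem sum_mul_div_reciprocity {h k : ℕ} (hh : 0 < h) (hk : 0 < k) (hc : h.Coprime k) :
    12 * (h * ∑ m ∈ range k, (m : ℤ) * (h * m / k : ℕ)
      + k * ∑ n ∈ range h, (n : ℤ) * (k * n / h : ℕ))
      = (h - 1) * (k - 1) * (8 * h * k - h - k - 1) := by
  have hmod : ∀ m, ((h * m % k : ℕ) : ℤ) = h * m - k * (h * m / k : ℕ) := fun m => by
    push_cast [Int.emod_def]; ring
  have hperm : h * ∑ m ∈ range k, (m : ℤ) - k * ∑ m ∈ range k, ((h * m / k : ℕ) : ℤ)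
      = ∑ m ∈ range k, (m : ℤ) :=
    calc _ = ∑ m ∈ range k, ((h * m % k : ℕ) : ℤ) := by
          simp only [hmod, mul_sum, sum_sub_distrib]
      _ = _ := sum_range_mul_mod_of_coprime hc (fun n => (n : ℤ))
  have hperm_sq : h ^ 2 * ∑ m ∈ range k, (m : ℤ) ^ 2
      - 2 * h * k * ∑ m ∈ range k, (m : ℤ) * (h * m / k : ℕ)
      + k ^ 2 * ∑ m ∈ range k, ((h * m / k : ℕ) : ℤ) ^ 2 = ∑ m ∈ range k, (m : ℤ) ^ 2 :=
    calc _ = ∑ m ∈ range k, ((h * m % k : ℕ) : ℤ) ^ 2 := by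
          simp only [hmod, mul_sum, ← sum_sub_distrib, ← sum_add_distrib]
          exact sum_congr rfl fun m _ => by ring
      _ = _ := sum_range_mul_mod_of_coprime hc (fun n => (n : ℤ) ^ 2)
  have hcount :
      ∑ m ∈ range k, ((h * m / k : ℕ) : ℤ) ^ 2 + ∑ m ∈ range k, ((h * m / k : ℕ) : ℤ)
        = 2 * (k - 1) * ∑ n ∈ range h, (n : ℤ)
          - 2 * ∑ n ∈ range h, (n : ℤ) * (k * n / h : ℕ) :=
    calc _ = ∑ m ∈ range k, ((h * m / k : ℕ) : ℤ) * ((h * m / k : ℕ) + 1) := by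
          rw [← sum_add_distrib]
          exact sum_congr rfl fun m _ => by ring
      _ = _ := by
          rw [sum_range_div_mul_div_add_one hh hk hc, mul_sum, mul_sum, mul_sum,
            ← sum_sub_distrib]
          exact sum_congr rfl fun n _ => by ring
  -- Eliminating `∑ ⌊hm/k⌋` and `∑ ⌊hm/k⌋²` from the three relations leaves `k` times the claim.
  refine mul_left_cancel₀ (by positivity : (k : ℤ) ≠ 0) ?_
  linear_combination (-6 : ℤ) * hperm_sq + 6 * k ^ 2 * hcount + 6 * k * hperm
    + (h ^ 2 - 1) * sum_range_natCast_sq_mul_six (R := ℤ) k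
    + 6 * k ^ 2 * (k - 1) * sum_range_natCast_mul_two (R := ℤ) h
    - 3 * k * (h - 1) * sum_range_natCast_mul_two (R := ℤ) k

-- Written without subtraction, so that `exact_mod_cast` carries it over to `ℚ`.
theorem sum_mul_mod_reciprocity {h k : ℕ} (hh : 0 < h) (hk : 0 < k) (hc : h.Coprime k) :
    12 * (h ^ 2 * ∑ m ∈ range k, (m : ℤ) * (h * m % k : ℕ)
      + k ^ 2 * ∑ n ∈ range h, (n : ℤ) * (k * n % h : ℕ)) + 9 * h ^ 2 * k ^ 2
      = h * k * (h ^ 2 + k ^ 2 + 1) + 3 * h ^ 2 * k ^ 2 * (h + k) := by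
  have expand : ∀ a b : ℕ, ∑ m ∈ range b, (m : ℤ) * (a * m % b : ℕ)
      = a * ∑ m ∈ range b, (m : ℤ) ^ 2
        - b * ∑ m ∈ range b, (m : ℤ) * (a * m / b : ℕ) :=
    fun a b => by
      rw [mul_sum, mul_sum, ← sum_sub_distrib]
      exact sum_congr rfl fun m _ => by push_cast [Int.emod_def]; ring
  rw [expand, expand]
  linear_combination -(h * k : ℤ) * sum_mul_div_reciprocity hh hk hc
    + 2 * h ^ 3 * sum_range_natCast_sq_mul_six (R := ℤ) k
    + 2 * k ^ 3 * sum_range_natCast_sq_mul_six (R := ℤ) h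

theorem dedekindS_add_dedekindS {h k : ℕ} (hh : 0 < h) (hk : 0 < k) (hc : h.Coprime k) :
    dedekindS h k + dedekindS k h = -1 / 4 + ((h : ℚ) / k + k / h + 1 / (h * k)) / 12 := by
  have key : (12 : ℚ) * (h ^ 2 * ∑ m ∈ range k, (m : ℚ) * (h * m % k : ℕ)
      + k ^ 2 * ∑ n ∈ range h, (n : ℚ) * (k * n % h : ℕ)) + 9 * h ^ 2 * k ^ 2
      = h * k * (h ^ 2 + k ^ 2 + 1) + 3 * h ^ 2 * k ^ 2 * (h + k) := by
    exact_mod_cast sum_mul_mod_reciprocity hh hk hc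
  rw [dedekindS_natCast_eq_sum_mul_mod hk hc, dedekindS_natCast_eq_sum_mul_mod hh hc.symm]
  field_simp
  linear_combination 4 * key

theorem stmt_12_general (x y z w : ℤ) (hdet : x * w - y * z = 1) (hz : z ≠ 0) (hx : 0 < x) :
    nMat !![x, y; z, w] = nMat (!![3, -1; 1, 0] * !![x, y; z, w]) := by
  lift x to ℕ using hx.le
  have hx0 : x ≠ 0 := by rintro rfl; simp at hx
  obtain ⟨a, ha, haz⟩ : ∃ a : ℕ, 0 < a ∧ z.natAbs = a := ⟨_, Int.natAbs_pos.2 hz, rfl⟩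
  have hxa : x.Coprime a := by
    have : Int.gcd x z = 1 := Int.isCoprime_iff_gcd_eq_one.1 ⟨w, -y, by linear_combination hdet⟩
    rwa [← haz]
  have hw : dedekindS w a = dedekindS x a := by
    refine dedekindS_eq_of_mul_modEq_one (Int.modEq_iff_dvd.2 ?_).symm
    rw [← haz, show (x : ℤ) * w - 1 = y * z by linear_combination hdet]
    exact Int.natAbs_dvd.2 (dvd_mul_left z y)
  have hy : dedekindS y x = dedekindS (-z) x := dedekindS_eq_of_mul_modEq_one <|
    (Int.modEq_iff_dvd.2 ⟨-w, by linear_combination hdet⟩).symm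
  have hrec := dedekindS_add_dedekindS (Nat.pos_of_ne_zero hx0) ha hxa
  field_simp at hrec
  have hdetQ : (x : ℚ) * w - y * z = 1 := by exact_mod_cast hdet
  rw [Matrix.mul_fin_two]
  rcases Int.natAbs_eq z with hz' | hz' <;> rw [haz] at hz' <;> subst hz' <;>
    push_cast at hdetQ <;>
    simp [nMat, hw, hy, dedekindS_neg, Int.sign_natCast_of_ne_zero, ha.ne', hx0] <;> field_simp
  · linear_combination -(1 / 4 : ℚ) * hrec + hdetQ
  · linear_combination (1 / 4 : ℚ) * hrec - hdetQ

theorem stmt_12 (x y z w : ℤ) (hdet : x * w - y * z = 1) (hz : z ≠ 0)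
    (htr : 2 < x + w) (hx : 0 < x) :
    nMat !![x, y; z, w] = nMat (!![3, -1; 1, 0] * !![x, y; z, w]) :=
  stmt_12_general x y z w hdet hz hx
end

section
/- Let p be a prime with p ≡ 3 (mod 4), and let (q, r) be the fundamental (least positive) solution of q² − 8p·r² = 1. Then r is odd if p ≡ 3 (mod 8), and r is even if p ≡ 7 (mod 8). -/
private lemma exists_pos_sq (a b c : ℤ) (hco : IsCoprime a b) (h : a * b = c ^ 2)
    (ha : 0 < a) : ∃ u : ℤ, 0 < u ∧ a = u ^ 2 := by
  obtain ⟨u, hu | hu⟩ := Int.sq_of_isCoprime hco h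
  · refine ⟨|u|, ?_, by rw [sq_abs]; exact hu⟩
    rcases eq_or_ne u 0 with h0 | h0
    · simp [h0] at hu; omega
    · exact abs_pos.mpr h0
  · nlinarith [sq_nonneg u]

private lemma sq_odd (v : ℤ) (h : Odd v) : ∃ y, v ^ 2 = 8 * y + 1 := by
  obtain ⟨x, hx⟩ := h
  obtain ⟨e, he⟩ := Int.even_mul_succ_self x
  exact ⟨e, by rw [hx]; linear_combination 4 * he⟩

theorem stmt_13 (p q r : ℤ) (hp : Prime p) (hp4 : p % 4 = 3)
    (hq : 0 < q) (hr : 0 < r) (hpell : q ^ 2 - 8 * p * r ^ 2 = 1)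
    (hmin : ∀ q' r' : ℤ, 0 < q' → 0 < r' → q' ^ 2 - 8 * p * r' ^ 2 = 1 → q ≤ q') :
    (p % 8 = 3 → Odd r) ∧ (p % 8 = 7 → Even r) := by
  have hp0 : 0 < p := by
    rcases lt_or_ge 0 p with h | h
    · exact h
    · exfalso
      have hpne : p ≠ 0 := hp.ne_zero
      have hp1 : p ≤ -1 := by omega
      have hr2 : 1 ≤ r ^ 2 := by nlinarith
      have hpr : p * r ^ 2 ≤ p * 1 := mul_le_mul_of_nonpos_left hr2 h
      nlinarith [sq_nonneg q]
  have hp2 : p % 2 = 1 := by omega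
  obtain ⟨k, hk⟩ : Odd q := by
    rcases Int.even_or_odd q with ⟨m, hm⟩ | h
    · exfalso
      have h2 : (2:ℤ) ∣ 1 := ⟨2 * m ^ 2 - 4 * p * r ^ 2, by
        rw [← hpell, hm]; ring⟩
      norm_num at h2
    · exact h
  subst hk
  have hk1 : 0 < k := by
    have hk0 : 0 ≤ k := by omega
    rcases hk0.eq_or_lt with h0 | h0
    · exfalso
      have hpr : 0 < p * r ^ 2 := mul_pos hp0 (pow_pos hr 2)
      rw [← h0] at hpell; nlinarith
    · exact h0
  have hst : k * (k + 1) = 2 * p * r ^ 2 := by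
    have h4 : 4 * (k * (k + 1)) = 4 * (2 * p * r ^ 2) := by linear_combination hpell
    linarith
  have hco : IsCoprime k (k + 1) := ⟨-1, 1, by ring⟩
  have h2p : (2 * p : ℤ) ≠ 0 := by positivity
  have h2dvd : (2:ℤ) ∣ k ∨ (2:ℤ) ∣ (k + 1) :=
    (Int.prime_two.dvd_mul).mp ⟨p * r ^ 2, by linarith⟩
  have hpdvd : p ∣ k ∨ p ∣ (k + 1) := (hp.dvd_mul).mp ⟨2 * r ^ 2, by linarith⟩
  have main : (p % 8 = 3 ∧ Odd r) ∨ (p % 8 = 7 ∧ Even r) := by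
    rcases h2dvd with ⟨m2, hm2⟩ | ⟨m2, hm2⟩ <;> rcases hpdvd with ⟨mp, hmp⟩ | ⟨mp, hmp⟩
    · -- Case A : 2 ∣ k, p ∣ k : impossible by minimality
      exfalso
      have h2mp : (2:ℤ) ∣ mp := by
        rcases (Int.prime_two.dvd_mul).mp (⟨m2, by rw [← hmp, hm2]⟩ : (2:ℤ) ∣ p * mp) with h | h
        · exfalso; omega
        · exact h
      obtain ⟨m, hm⟩ := h2mp
      have hkm : k = 2 * p * m := by rw [hmp, hm]; ring
      have hmpos : 0 < m := by nlinarith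
      have hmn : m * (k + 1) = r ^ 2 :=
        mul_left_cancel₀ h2p (by linear_combination hst - (k + 1) * hkm)
      have hcomk : IsCoprime m (k + 1) :=
        hco.of_isCoprime_of_dvd_left ⟨2 * p, by rw [hkm]; ring⟩
      obtain ⟨u, hu0, hu⟩ := exists_pos_sq m (k + 1) r hcomk hmn hmpos
      obtain ⟨v, hv0, hv⟩ := exists_pos_sq (k + 1) m r hcomk.symm
        (by rw [mul_comm]; exact hmn) (by omega)
      have he : v ^ 2 - 2 * p * u ^ 2 = 1 := by
        rw [← hv, ← hu]; linarith [hkm]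
      -- u must be even, else contradiction mod 8; then get smaller Pell solution
      rcases Int.even_or_odd u with ⟨z, hz⟩ | hodd
      · -- u = z + z : smaller solution
        have hz0 : 0 < z := by omega
        have hpe : v ^ 2 - 8 * p * z ^ 2 = 1 := by
          linear_combination he + 2 * p * (u + 2 * z) * hz
        have hle := hmin v z hv0 hz0 hpe
        have hvv : v ≤ v ^ 2 := by nlinarith
        have : v ^ 2 = k + 1 := hv.symm
        linarith
      · -- u odd : contradiction
        have hvodd : Odd v := by
          rcases Int.even_or_odd v with ⟨x, hx⟩ | h
          · exfalso
            have : (2:ℤ) ∣ 1 := ⟨2 * x ^ 2 - p * u ^ 2, by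
              linear_combination -he + (v + 2 * x) * hx⟩
            norm_num at this
          · exact h
        obtain ⟨y, hv8⟩ := sq_odd v hvodd
        obtain ⟨e, hu8⟩ := sq_odd u hodd
        have h2p8 : 2 * p = 8 * y - 16 * (p * e) := by
          linear_combination -he + hv8 - 2 * p * hu8
        have hdvd : (4:ℤ) ∣ p := ⟨y - 2 * (p * e), by linarith⟩
        omega
    · -- Case B : 2 ∣ k, p ∣ k + 1
      rw [hmp] at hst
      rw [hm2] at hst
      have hmn : m2 * mp = r ^ 2 :=
        mul_left_cancel₀ h2p (by linear_combination hst)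
      have hm2pos : 0 < m2 := by omega
      have hmppos : 0 < mp := by nlinarith
      have hcomk : IsCoprime m2 mp :=
        (hco.of_isCoprime_of_dvd_left ⟨2, by rw [hm2]; ring⟩).of_isCoprime_of_dvd_right
          ⟨p, by rw [hmp]; ring⟩
      obtain ⟨u, hu0, hu⟩ := exists_pos_sq m2 mp r hcomk hmn hm2pos
      obtain ⟨v, hv0, hv⟩ := exists_pos_sq mp m2 r hcomk.symm
        (by rw [mul_comm]; exact hmn) hmppos
      have hruv : r = u * v := by
        have hsq : r ^ 2 = (u * v) ^ 2 := by rw [← hmn, hu, hv]; ring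
        have : (r - u * v) * (r + u * v) = 0 := by linear_combination hsq
        rcases mul_eq_zero.mp this with h | h
        · linarith
        · nlinarith
      have he : p * v ^ 2 - 2 * u ^ 2 = 1 := by
        have h1 : k = 2 * u ^ 2 := by rw [hm2, hu]
        have h2 : k + 1 = p * v ^ 2 := by rw [hmp, hv]
        linarith
      have hvodd : Odd v := by
        rcases Int.even_or_odd v with ⟨x, hx⟩ | h
        · exfalso
          have : (2:ℤ) ∣ 1 := ⟨2 * (p * x ^ 2) - u ^ 2, by
            linear_combination -he + p * (v + 2 * x) * hx⟩
          norm_num at this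
        · exact h
      obtain ⟨y, hv8⟩ := sq_odd v hvodd
      rcases Int.even_or_odd u with ⟨z, hz⟩ | hodd
      · exfalso
        have h8 : p - 1 = 8 * (z ^ 2 - p * y) := by
          linear_combination he - p * hv8 + 2 * (u + 2 * z) * hz
        have hdvd : (8:ℤ) ∣ p - 1 := ⟨z ^ 2 - p * y, h8⟩
        omega
      · obtain ⟨e, hu8⟩ := sq_odd u hodd
        have h8 : p - 3 = 8 * (2 * e - p * y) := by
          linear_combination he - p * hv8 + 2 * hu8
        have hdvd : (8:ℤ) ∣ p - 3 := ⟨2 * e - p * y, h8⟩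
        left
        exact ⟨by omega, by rw [hruv]; exact hodd.mul hvodd⟩
    · -- Case C : 2 ∣ k + 1, p ∣ k
      rw [hm2] at hst
      rw [hmp] at hst
      have hmn : mp * m2 = r ^ 2 :=
        mul_left_cancel₀ h2p (by linear_combination hst)
      have hmppos : 0 < mp := by nlinarith
      have hm2pos : 0 < m2 := by nlinarith
      have hcomk : IsCoprime mp m2 :=
        (hco.of_isCoprime_of_dvd_left ⟨p, by rw [hmp]; ring⟩).of_isCoprime_of_dvd_right
          ⟨2, by rw [hm2]; ring⟩
      obtain ⟨u, hu0, hu⟩ := exists_pos_sq mp m2 r hcomk hmn hmppos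
      obtain ⟨v, hv0, hv⟩ := exists_pos_sq m2 mp r hcomk.symm
        (by rw [mul_comm]; exact hmn) hm2pos
      have hruv : r = u * v := by
        have hsq : r ^ 2 = (u * v) ^ 2 := by rw [← hmn, hu, hv]; ring
        have : (r - u * v) * (r + u * v) = 0 := by linear_combination hsq
        rcases mul_eq_zero.mp this with h | h
        · linarith
        · nlinarith
      have he : 2 * v ^ 2 - p * u ^ 2 = 1 := by
        have h1 : k = p * u ^ 2 := by rw [hmp, hu]
        have h2 : k + 1 = 2 * v ^ 2 := by rw [hm2, hv]
        linarith
      have huodd : Odd u := by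
        rcases Int.even_or_odd u with ⟨z, hz⟩ | h
        · exfalso
          have : (2:ℤ) ∣ 1 := ⟨v ^ 2 - 2 * (p * z ^ 2), by
            linear_combination -he - p * (u + 2 * z) * hz⟩
          norm_num at this
        · exact h
      obtain ⟨e, hu8⟩ := sq_odd u huodd
      rcases Int.even_or_odd v with ⟨x, hx⟩ | hodd
      · have h8 : p + 1 = 8 * (x ^ 2 - p * e) := by
          linear_combination -he + 2 * (v + 2 * x) * hx - p * hu8
        have hdvd : (8:ℤ) ∣ p + 1 := ⟨x ^ 2 - p * e, h8⟩
        right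
        have hev : Even v := ⟨x, hx⟩
        refine ⟨by omega, by rw [hruv]; exact hev.mul_left u⟩
      · exfalso
        obtain ⟨y, hv8⟩ := sq_odd v hodd
        have h8 : p - 1 = 8 * (2 * y - p * e) := by
          linear_combination -he + 2 * hv8 - p * hu8
        have hdvd : (8:ℤ) ∣ p - 1 := ⟨2 * y - p * e, h8⟩
        omega
    · -- Case D : 2 ∣ k + 1, p ∣ k + 1 : impossible since -1 is not a square mod p
      exfalso
      have h2mp : (2:ℤ) ∣ mp := by
        rcases (Int.prime_two.dvd_mul).mp (⟨m2, by rw [← hmp, hm2]⟩ : (2:ℤ) ∣ p * mp) with h | h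
        · exfalso; omega
        · exact h
      obtain ⟨m, hm⟩ := h2mp
      have hkm : k + 1 = 2 * p * m := by rw [hmp, hm]; ring
      have hmpos : 0 < m := by nlinarith
      have hmn : k * m = r ^ 2 := by
        apply mul_left_cancel₀ h2p
        linear_combination hst - k * hkm
      have hcomk : IsCoprime k m :=
        hco.of_isCoprime_of_dvd_right ⟨2 * p, by rw [hkm]; ring⟩
      obtain ⟨u, hu0, hu⟩ := exists_pos_sq k m r hcomk hmn hk1
      obtain ⟨v, hv0, hv⟩ := exists_pos_sq m k r hcomk.symm
        (by rw [mul_comm]; exact hmn) hmpos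
      have he : 2 * p * v ^ 2 - u ^ 2 = 1 := by
        have h1 : k = u ^ 2 := hu
        have h2 : m = v ^ 2 := hv
        have := hkm
        nlinarith
      set P := p.natAbs with hP
      haveI : Fact (Nat.Prime P) := ⟨Int.prime_iff_natAbs_prime.mp hp⟩
      have hPp : (P : ℤ) = p := Int.natAbs_of_nonneg hp0.le
      have hd : (P : ℤ) ∣ u ^ 2 + 1 := by rw [hPp]; exact ⟨2 * v ^ 2, by linarith⟩
      have hz : ((u ^ 2 + 1 : ℤ) : ZMod P) = 0 :=
        (ZMod.intCast_zmod_eq_zero_iff_dvd _ _).mpr hd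
      push_cast at hz
      have hsq : IsSquare (-1 : ZMod P) := ⟨(u : ZMod P), by linear_combination -hz⟩
      have h4 := ZMod.exists_sq_eq_neg_one_iff.mp hsq
      have : (P : ℤ) % 4 = 3 := by omega
      have : P % 4 = 3 := by omega
      exact h4 this
  constructor <;> intro h8 <;> rcases main with ⟨h1, h2⟩ | ⟨h1, h2⟩ <;>
    first | exact h2 | omega
end
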